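/- arXiv:1903.11892 — 4 statements merged into one kernel-verified Lean document; each statement's English description precedes it below -/
import Mathlib

section
/- For a finite group G, define η_G = (1/|G|) · Σ_{g∈G} 1/ord(g). If K is a quotient of a finite group G (i.e., there is a surjective group homomorphism G → K), then η_G ≤ η_K. -/
theorem eta_le_eta_quotient
    (G K : Type*) [Group G] [Fintype G] [Group K] [Fintype K]
    (φ : G →* K) (hφ : Function.Surjective φ) :
    (1 / (Fintype.card G : ℚ)) * ∑ g : G, 1 / (orderOf g : ℚ) ≤
      (1 / (Fintype.card K : ℚ)) * ∑ k : K, 1 / (orderOf k : ℚ) := by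
  classical
  set n : ℕ := Nat.card φ.ker with hn
  -- card G = card K * n
  have hcard : Fintype.card G = Fintype.card K * n := by
    have h1 := Subgroup.card_eq_card_quotient_mul_card_subgroup φ.ker
    have h2 : Nat.card (G ⧸ φ.ker) = Nat.card K :=
      Nat.card_congr (QuotientGroup.quotientKerEquivOfSurjective φ hφ).toEquiv
    have h3 : Nat.card G = Nat.card K * n := by rw [h1, h2]
    rwa [Nat.card_eq_fintype_card, Nat.card_eq_fintype_card] at h3
  -- fiber cardinality
  have hfiber : ∀ k : K, (Finset.univ.filter fun g => φ g = k).card = n := by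
    intro k
    obtain ⟨g0, hg0⟩ := hφ k
    have e : {g // φ g = k} ≃ φ.ker :=
      { toFun := fun g => ⟨g0⁻¹ * g.1, by simp [MonoidHom.mem_ker, g.2, hg0]⟩
        invFun := fun x => ⟨g0 * x.1, by
          simp [map_mul, MonoidHom.mem_ker.mp x.2, hg0]⟩
        left_inv := fun g => by simp
        right_inv := fun x => by simp }
    calc (Finset.univ.filter fun g => φ g = k).card
        = Fintype.card {g // φ g = k} := (Fintype.card_subtype _).symm
      _ = Nat.card {g // φ g = k} := (Nat.card_eq_fintype_card).symm
      _ = n := Nat.card_congr e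
  have hpos : ∀ g : G, (0:ℚ) < orderOf (φ g) := by
    intro g; exact_mod_cast orderOf_pos (φ g)
  have step1 : ∑ g : G, 1 / (orderOf g : ℚ) ≤ ∑ g : G, 1 / (orderOf (φ g) : ℚ) := by
    apply Finset.sum_le_sum
    intro g _
    apply one_div_le_one_div_of_le (hpos g)
    exact_mod_cast Nat.le_of_dvd (orderOf_pos g) (orderOf_map_dvd φ g)
  have step2 : ∑ g : G, 1 / (orderOf (φ g) : ℚ) = (n : ℚ) * ∑ k : K, 1 / (orderOf k : ℚ) := by
    rw [Finset.sum_comp (fun k => 1 / (orderOf k : ℚ)) φ,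
      Finset.image_univ_of_surjective hφ, Finset.mul_sum]
    refine Finset.sum_congr rfl fun k _ => ?_
    rw [hfiber k, nsmul_eq_mul]
  have hKpos : (0:ℚ) < Fintype.card K := by exact_mod_cast Fintype.card_pos
  have hnpos : (0:ℚ) < n := by
    have : 0 < n := Nat.card_pos
    exact_mod_cast this
  have hsum_nonneg : 0 ≤ ∑ k : K, 1 / (orderOf k : ℚ) :=
    Finset.sum_nonneg fun k _ => by positivity
  calc (1 / (Fintype.card G : ℚ)) * ∑ g : G, 1 / (orderOf g : ℚ)
      ≤ (1 / (Fintype.card G : ℚ)) * ∑ g : G, 1 / (orderOf (φ g) : ℚ) := by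
        apply mul_le_mul_of_nonneg_left step1
        positivity
    _ = (1 / (Fintype.card K : ℚ)) * ∑ k : K, 1 / (orderOf k : ℚ) := by
        rw [step2, hcard]
        push_cast
        field_simp
end

section
/- For a finite group G, define η_G = (1/|G|) · Σ_{g∈G} 1/ord(g). If K is a quotient of a finite group G via a surjective homomorphism, then η_K ≤ (|G|/|K|) · η_G. -/
theorem eta_quotient_le_ratio_mul_eta
    (G K : Type*) [Group G] [Fintype G] [Group K] [Fintype K]
    (φ : G →* K) (hφ : Function.Surjective φ) :
    (1 / (Fintype.card K : ℚ)) * ∑ k : K, 1 / (orderOf k : ℚ) ≤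
      ((Fintype.card G : ℚ) / (Fintype.card K : ℚ)) *
        ((1 / (Fintype.card G : ℚ)) * ∑ g : G, 1 / (orderOf g : ℚ)) := by
  classical
  have hG0 : (Fintype.card G : ℚ) ≠ 0 := by positivity
  have hK0 : (Fintype.card K : ℚ) ≠ 0 := by positivity
  have hrw : ((Fintype.card G : ℚ) / (Fintype.card K : ℚ)) *
        ((1 / (Fintype.card G : ℚ)) * ∑ g : G, 1 / (orderOf g : ℚ)) =
      (1 / (Fintype.card K : ℚ)) * ∑ g : G, 1 / (orderOf g : ℚ) := by
    field_simp
  rw [hrw]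
  have hKpos : (0:ℚ) < (Fintype.card K : ℚ) := by positivity
  apply mul_le_mul_of_nonneg_left _ (by positivity : (0:ℚ) ≤ 1 / (Fintype.card K : ℚ))
  -- main inequality: ∑ k 1/ord k ≤ ∑ g 1/ord g
  set n := Nat.card φ.ker with hn
  have hnpos : 0 < n := Nat.card_pos
  -- order bound
  have hord : ∀ g : G, orderOf g ∣ orderOf (φ g) * n := by
    intro g
    apply orderOf_dvd_of_pow_eq_one
    rw [pow_mul]
    have hm : g ^ orderOf (φ g) ∈ φ.ker := by
      simp [MonoidHom.mem_ker, map_pow, pow_orderOf_eq_one]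
    have h1 : (⟨g ^ orderOf (φ g), hm⟩ : φ.ker) ^ n = 1 := pow_card_eq_one'
    have := congrArg (Subtype.val) h1
    simpa using this
  -- fiber cards
  have hcard : ∀ k : K, (Finset.univ.filter fun g : G => φ g = k).card = n := by
    intro k
    obtain ⟨g₀, hg₀⟩ := hφ k
    have h1 : (Finset.univ.filter fun g : G => φ g = k).card =
        (Finset.univ.filter fun g : G => φ g = 1).card := by
      apply Finset.card_bij (fun g _ => g * g₀⁻¹)
      · intro a ha
        simp only [Finset.mem_filter, Finset.mem_univ, true_and] at ha ⊢
        simp [map_mul, ha, hg₀]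
      · intro a ha b hb hab
        exact mul_right_cancel hab
      · intro b hb
        refine ⟨b * g₀, ?_, by group⟩
        simp only [Finset.mem_filter, Finset.mem_univ, true_and] at hb ⊢
        simp [map_mul, hb, hg₀]
    rw [h1, hn]
    rw [Nat.card_eq_fintype_card, Fintype.card_subtype]
    congr 1
    ext g
    simp [MonoidHom.mem_ker]
  calc ∑ k : K, 1 / (orderOf k : ℚ)
      ≤ ∑ k : K, ∑ g ∈ Finset.univ.filter fun g : G => φ g = k,
          (1 / (orderOf g : ℚ)) := by
        apply Finset.sum_le_sum
        intro k _
        have hbound : ∀ g ∈ Finset.univ.filter fun g : G => φ g = k,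
            1 / ((orderOf k : ℚ) * n) ≤ 1 / (orderOf g : ℚ) := by
          intro g hg
          simp only [Finset.mem_filter, Finset.mem_univ, true_and] at hg
          have h1 := hord g
          rw [hg] at h1
          have hle : (orderOf g : ℚ) ≤ (orderOf k : ℚ) * n := by
            have := Nat.le_of_dvd (Nat.mul_pos (orderOf_pos k) hnpos) h1
            exact_mod_cast this
          apply one_div_le_one_div_of_le
          · exact_mod_cast orderOf_pos g
          · exact hle
        have := Finset.card_nsmul_le_sum _ _ _ hbound
        rw [hcard k] at this
        refine le_trans ?_ this
        have hok : (0:ℚ) < (orderOf k : ℚ) := by exact_mod_cast orderOf_pos k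
        rw [nsmul_eq_mul]
        have heq : (n:ℚ) * (1 / ((orderOf k : ℚ) * n)) = 1 / (orderOf k : ℚ) := by
          field_simp
        rw [heq]
      _ = ∑ g : G, 1 / (orderOf g : ℚ) := by
        exact Finset.sum_fiberwise _ _ _
end

section
/- Let q be a prime power, n a positive integer, and let d₁, d₂, d₃ be positive integers with d₃ ≤ d₂ ≤ d₁ such that d₂ does not divide 6·d₁, d₃ does not divide 6·d₁ and d₃ does not divide 6·d₂. If m is a positive integer divisible by lcm(q^{d₁}−1, q^{d₂}−1, q^{d₃}−1), then m ≥ q^{(9/4)·d₃}. -/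
/-!
Put `a = q^d₁ - 1`, `b = q^d₂ - 1`, `c = q^d₃ - 1` and `gᵢⱼ = gcd dᵢ dⱼ`. Since
`gcd (q^x - 1) (q^y - 1) = q^(gcd x y) - 1`, we get `lcm a b ≥ q^(d₁ - g₁₂) · b`, and since
`gcd (lcm a b) c ∣ gcd a c · gcd b c`, also `lcm (lcm a b) c ≥ q^(d₃ - g₁₃ - g₂₃) · lcm a b`.
The non-divisibility hypotheses force `4 gᵢⱼ ≤ dⱼ` and `d₃ < d₂`, so the resulting exponent
`(d₁ - g₁₂) + (d₂ - 1) + (d₃ - g₁₃ - g₂₃)` is at least `9 d₃ / 4`.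
-/

namespace Nat

theorem four_mul_gcd_le_of_not_dvd_six_mul {x y : ℕ} (hy : 0 < y) (h : ¬ y ∣ 6 * x) :
    4 * gcd x y ≤ y := by
  obtain ⟨k, hk⟩ := gcd_dvd_right x y
  by_contra! hlt
  have hk4 : k < 4 := by nlinarith
  have hk6 : k ∣ 6 := by interval_cases k <;> first | decide | (simp only [mul_zero] at hk; omega)
  apply h
  rw [hk, mul_comm 6]
  exact mul_dvd_mul (gcd_dvd_left x y) hk6

theorem gcd_lcm_dvd_mul_gcd (a b c : ℕ) : gcd (lcm a b) c ∣ gcd a c * gcd b c :=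
  (gcd_dvd_gcd_of_dvd_left c (lcm_dvd_mul a b)).trans (gcd_mul_left_dvd_mul_gcd c a b)

theorem mul_le_lcm_of_gcd_le {a b k x : ℕ} (hb : 0 < b) (hg : gcd a b ≤ k) (hx : x * k ≤ b) :
    x * a ≤ lcm a b := by
  refine le_of_mul_le_mul_left ?_ (gcd_pos_of_pos_right a hb)
  calc gcd a b * (x * a) = x * gcd a b * a := by ring
    _ ≤ x * k * a := by gcongr
    _ ≤ b * a := by gcongr
    _ = gcd a b * lcm a b := by rw [gcd_mul_lcm, mul_comm]

section PowSubOne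

variable {q : ℕ}

theorem pow_sub_mul_pow_sub_one_le (hq : 0 < q) {g d : ℕ} (hg : g ≤ d) :
    q ^ (d - g) * (q ^ g - 1) ≤ q ^ d - 1 := by
  have hsplit : q ^ (d - g) * q ^ g = q ^ d := by rw [← pow_add, Nat.sub_add_cancel hg]
  have hpos : 1 ≤ q ^ (d - g) := one_le_pow _ _ hq
  rw [Nat.mul_sub_one, hsplit]
  omega

theorem pow_sub_sub_mul_le (hq : 0 < q) {g h d : ℕ} (hgh : g + h ≤ d) :
    q ^ (d - g - h) * ((q ^ g - 1) * (q ^ h - 1)) ≤ q ^ d - 1 :=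
  calc q ^ (d - g - h) * ((q ^ g - 1) * (q ^ h - 1))
      ≤ q ^ (d - g - h) * q ^ h * (q ^ g - 1) := by
        rw [mul_comm (q ^ g - 1), ← mul_assoc]; gcongr; omega
    _ = q ^ (d - g) * (q ^ g - 1) := by rw [← pow_add, Nat.sub_add_cancel (by omega)]
    _ ≤ q ^ d - 1 := pow_sub_mul_pow_sub_one_le hq (by omega)

theorem pow_pred_le_pow_sub_one (hq : 1 < q) {d : ℕ} (hd : 0 < d) : q ^ (d - 1) ≤ q ^ d - 1 :=
  calc q ^ (d - 1) ≤ q ^ (d - 1) * (q ^ 1 - 1) := Nat.le_mul_of_pos_right _ (by simpa using hq)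
    _ ≤ q ^ d - 1 := pow_sub_mul_pow_sub_one_le (by omega) hd

theorem pow_sub_one_pos (hq : 1 < q) {d : ℕ} (hd : 0 < d) : 0 < q ^ d - 1 := by
  have := Nat.one_lt_pow hd.ne' hq
  omega

theorem pow_sub_gcd_mul_le_lcm (hq : 1 < q) {x : ℕ} (hx : 0 < x) (y : ℕ) :
    q ^ (x - gcd x y) * (q ^ y - 1) ≤ lcm (q ^ x - 1) (q ^ y - 1) := by
  rw [lcm_comm]
  refine mul_le_lcm_of_gcd_le (pow_sub_one_pos hq hx) ?_
    (pow_sub_mul_pow_sub_one_le (by omega) (gcd_le_left y hx))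
  rw [gcd_comm, pow_sub_one_gcd_pow_sub_one]

theorem pow_sub_gcd_sub_gcd_mul_le_lcm (hq : 1 < q) {x y z : ℕ} (hz : 0 < z)
    (hsum : gcd x z + gcd y z ≤ z) :
    q ^ (z - gcd x z - gcd y z) * lcm (q ^ x - 1) (q ^ y - 1) ≤
      lcm (lcm (q ^ x - 1) (q ^ y - 1)) (q ^ z - 1) := by
  refine mul_le_lcm_of_gcd_le (pow_sub_one_pos hq hz) (le_of_dvd ?_ ?_)
    (pow_sub_sub_mul_le (by omega) hsum)
  · exact Nat.mul_pos (pow_sub_one_pos hq (gcd_pos_of_pos_right x hz))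
      (pow_sub_one_pos hq (gcd_pos_of_pos_right y hz))
  · simpa only [pow_sub_one_gcd_pow_sub_one] using gcd_lcm_dvd_mul_gcd (q ^ x - 1) (q ^ y - 1) (q ^ z - 1)

end PowSubOne

end Nat

theorem lcm_lower_bound_d3 (q d₁ d₂ d₃ m : ℕ) (hq : IsPrimePow q)
    (h3 : 0 < d₃) (h32 : d₃ ≤ d₂) (h21 : d₂ ≤ d₁)
    (hnd2 : ¬ d₂ ∣ 6 * d₁) (hnd31 : ¬ d₃ ∣ 6 * d₁) (hnd32 : ¬ d₃ ∣ 6 * d₂)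
    (hm : 0 < m)
    (hdvd : Nat.lcm (Nat.lcm (q ^ d₁ - 1) (q ^ d₂ - 1)) (q ^ d₃ - 1) ∣ m) :
    (m : ℝ) ≥ (q : ℝ) ^ ((9 / 4 : ℝ) * d₃) := by
  have hq1 : 1 < q := hq.one_lt
  have h12 := Nat.four_mul_gcd_le_of_not_dvd_six_mul (by omega) hnd2
  have h13 := Nat.four_mul_gcd_le_of_not_dvd_six_mul h3 hnd31
  have h23 := Nat.four_mul_gcd_le_of_not_dvd_six_mul h3 hnd32
  have hd32 : d₃ ≠ d₂ := fun h ↦ hnd32 (h ▸ dvd_mul_left d₃ 6)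
  set E := (d₃ - d₁.gcd d₃ - d₂.gcd d₃) + (d₁ - d₁.gcd d₂) + (d₂ - 1)
  have hE : 9 * d₃ ≤ 4 * E := by omega
  have hqE : q ^ E ≤ m := calc
    q ^ E ≤ q ^ (d₃ - d₁.gcd d₃ - d₂.gcd d₃) * (q ^ (d₁ - d₁.gcd d₂) * (q ^ d₂ - 1)) := by
      rw [pow_add, pow_add, mul_assoc]
      gcongr
      exact Nat.pow_pred_le_pow_sub_one hq1 (by omega)
    _ ≤ q ^ (d₃ - d₁.gcd d₃ - d₂.gcd d₃) * Nat.lcm (q ^ d₁ - 1) (q ^ d₂ - 1) := by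
      gcongr
      exact Nat.pow_sub_gcd_mul_le_lcm hq1 (by omega) d₂
    _ ≤ m := (Nat.pow_sub_gcd_sub_gcd_mul_le_lcm hq1 h3 (by omega)).trans (Nat.le_of_dvd hm hdvd)
  calc (q : ℝ) ^ ((9 / 4 : ℝ) * d₃) ≤ (q : ℝ) ^ (E : ℝ) := by
        gcongr
        · exact_mod_cast hq1.le
        · have : (9 : ℝ) * d₃ ≤ 4 * E := by exact_mod_cast hE
          linarith
    _ = ((q ^ E : ℕ) : ℝ) := by rw [Real.rpow_natCast]; push_cast; rfl
    _ ≤ m := by exact_mod_cast hqE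
end

section
/- Let W ≤ F_{q^n} be an F_q-linear subspace with dim W ≥ n/2 + 1. Then the norm map N : F_{q^n} → F_q, N(x) = x^{(q^n−1)/(q−1)}, is surjective when restricted to W. -/
/-!
Suppose no `x ∈ W` has norm `a ≠ 0`. Orthogonality of the multiplicative characters `χ` of `F`
then gives `#(W \ {0}) = -∑_{χ ≠ 1} χ(a⁻¹) ∑_{x ∈ W} χ(N x)`. For `χ ≠ 1` the composite `χ ∘ N`
is a nontrivial character of `E`, as `N` is onto, and expanding the indicator of `W` in the
additive characters of `E ⧸ W` turns its sum over `W` into an average of Gauss sums, each of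
absolute value at most `√(q^n)`. Hence `q^(dim W) - 1 ≤ (q - 2) q^(n/2)`, which fails once
`dim W ≥ n/2 + 1`.
-/

open Finset

namespace MulChar

variable {M R : Type*} [CommMonoid M] [CommRing R]

section Orthogonality

variable [Finite M] [IsDomain R] [HasEnoughRootsOfUnity R (Monoid.exponent Mˣ)]
  [Fintype (MulChar M R)] [DecidableEq M]

lemma sum_apply_eq_ite (a : M) :
    ∑ χ : MulChar M R, χ a = if a = 1 then (Nat.card Mˣ : R) else 0 := by
  split_ifs with ha
  · simp [ha, ← Nat.card_eq_fintype_card, card_eq_card_units_of_hasEnoughRootsOfUnity]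
  · obtain ⟨χ, hχ⟩ := exists_apply_ne_one_of_hasEnoughRootsOfUnity M R ha
    refine eq_zero_of_mul_eq_self_left hχ ?_
    simp only [mul_sum, ← MulChar.mul_apply]
    exact Fintype.sum_bijective _ (Group.mulLeft_bijective χ) _ _ fun _ ↦ rfl

lemma sum_apply_inv_mul_sum_apply_eq {ι : Type*} [Fintype ι] (f : ι → M) (a : Mˣ) :
    ∑ χ : MulChar M R, χ ↑a⁻¹ * ∑ i, χ (f i) = Nat.card Mˣ * #{i | f i = a} := by
  simp_rw [mul_sum, ← map_mul]
  rw [sum_comm]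
  simp_rw [sum_apply_eq_ite, Units.inv_mul_eq_one, sum_ite, sum_const_zero, add_zero, sum_const,
    nsmul_eq_mul, mul_comm]
  simp only [eq_comm]

end Orthogonality

lemma norm_apply_unit {K : Type*} [NormedField K] [Finite Mˣ] (χ : MulChar M K) (a : Mˣ) :
    ‖χ a‖ = 1 := by
  refine (pow_eq_one_iff_of_nonneg (norm_nonneg _) (Nat.card_pos (α := Mˣ)).ne').mp ?_
  rw [← norm_pow, ← map_pow, ← Units.val_pow_eq_pow_val, pow_card_eq_one', Units.val_one,
    map_one, norm_one]

lemma exists_apply_eq_of_norm_sum_le [Finite M] [HasEnoughRootsOfUnity ℂ (Monoid.exponent Mˣ)]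
    {ι : Type*} [Fintype ι] (f : ι → M) [DecidablePred fun i ↦ IsUnit (f i)] (a : Mˣ) {B : ℝ}
    (hB : ∀ χ : MulChar M ℂ, χ ≠ 1 → ‖∑ i, χ (f i)‖ ≤ B)
    (h : ((Nat.card Mˣ : ℝ) - 1) * B < #{i | IsUnit (f i)}) :
    ∃ i, f i = a := by
  classical
  have := Fintype.ofFinite (MulChar M ℂ)
  by_contra! hne
  have hsum := sum_apply_inv_mul_sum_apply_eq (R := ℂ) f a
  rw [filter_false_of_mem (by simpa using hne), card_empty, Nat.cast_zero, mul_zero,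
    ← add_sum_erase _ _ (mem_univ 1), one_apply_coe, one_mul] at hsum
  have htriv : ∑ i, (1 : MulChar M ℂ) (f i) = #{i | IsUnit (f i)} := by
    rw [card_filter, Nat.cast_sum]
    refine sum_congr rfl fun i _ ↦ ?_
    split_ifs with hi
    · simp [one_apply hi]
    · simp [map_nonunit _ hi]
  refine h.not_ge ?_
  calc (#{i | IsUnit (f i)} : ℝ)
      = ‖∑ χ ∈ univ.erase (1 : MulChar M ℂ), χ ↑a⁻¹ * ∑ i, χ (f i)‖ := by
        rw [← Complex.norm_natCast, ← htriv, eq_neg_of_add_eq_zero_left hsum, norm_neg]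
    _ ≤ ∑ χ ∈ univ.erase (1 : MulChar M ℂ), ‖χ ↑a⁻¹ * ∑ i, χ (f i)‖ := norm_sum_le _ _
    _ ≤ ∑ χ ∈ univ.erase (1 : MulChar M ℂ), B := sum_le_sum fun χ hχ ↦ by
        rw [norm_mul, norm_apply_unit, one_mul]
        exact hB χ (ne_of_mem_erase hχ)
    _ = (Nat.card Mˣ - 1) * B := by
        rw [sum_const, card_erase_of_mem (mem_univ _), card_univ, ← Nat.card_eq_fintype_card,
          card_eq_card_units_of_hasEnoughRootsOfUnity, nsmul_eq_mul, Nat.cast_pred Nat.card_pos]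

section compMonoidWithZeroHom

variable {G₀ N : Type*} [CommGroupWithZero G₀] [CommMonoidWithZero N] [Nontrivial N]

def compMonoidWithZeroHom (χ : MulChar N R) (f : G₀ →*₀ N) : MulChar G₀ R where
  toFun x := χ (f x)
  map_one' := by simp
  map_mul' x y := by simp
  map_nonunit' x hx := by
    rw [isUnit_iff_ne_zero, not_not] at hx
    rw [hx, map_zero, χ.map_zero]

lemma compMonoidWithZeroHom_ne_one {χ : MulChar N R} (hχ : χ ≠ 1) {f : G₀ →*₀ N}
    (hf : Function.Surjective f) : χ.compMonoidWithZeroHom f ≠ 1 := by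
  obtain ⟨a, ha⟩ := ne_one_iff.mp hχ
  obtain ⟨x, hx⟩ := hf a
  have hx0 : x ≠ 0 := by
    rintro rfl
    exact a.ne_zero (hx.symm.trans (map_zero f))
  exact ne_one_iff.mpr ⟨Units.mk0 x hx0, by simpa [compMonoidWithZeroHom, hx] using ha⟩

end compMonoidWithZeroHom

end MulChar

section GaussSum

variable {E : Type*} [Field E] [Fintype E] {χ : MulChar E ℂ}

lemma norm_gaussSum_sq (hχ : χ ≠ 1) {ψ : AddChar E ℂ} (hψ : ψ.IsPrimitive) :
    ‖gaussSum χ ψ‖ ^ 2 = Fintype.card E := by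
  have := gaussSum_mul_gaussSum_eq_card hχ hψ
  rw [← star_gaussSum_eq, Complex.star_def, Complex.mul_conj'] at this
  exact_mod_cast this

lemma norm_gaussSum_le (hχ : χ ≠ 1) (ψ : AddChar E ℂ) :
    ‖gaussSum χ ψ‖ ≤ √(Fintype.card E) := by
  rcases eq_or_ne ψ 1 with rfl | hψ
  · simp [gaussSum_one_right hχ]
  · rw [← norm_gaussSum_sq hχ (AddChar.IsPrimitive.of_ne_one hψ), Real.sqrt_sq (norm_nonneg _)]

lemma MulChar.norm_sum_addSubgroup_le (hχ : χ ≠ 1) (H : AddSubgroup E) [Fintype H] :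
    ‖∑ x : H, χ x‖ ≤ √(Fintype.card E) := by
  classical
  have hfourier : Fintype.card (E ⧸ H) * ∑ x : H, χ x =
      ∑ φ : AddChar (E ⧸ H) ℂ, gaussSum χ (φ.compAddMonoidHom (QuotientAddGroup.mk' H)) := by
    simp only [gaussSum, AddChar.compAddMonoidHom_apply, mul_sum]
    rw [sum_comm]
    simp_rw [← mul_sum, AddChar.sum_apply_eq_ite, QuotientAddGroup.mk'_apply,
      QuotientAddGroup.eq_zero_iff]
    rw [mul_sum, ← sum_subtype {x | x ∈ H} (by simp) (fun x ↦ Fintype.card (E ⧸ H) * χ x),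
      sum_filter]
    refine sum_congr rfl fun x _ ↦ ?_
    split_ifs <;> simp [mul_comm]
  have hcard : 0 < (Fintype.card (E ⧸ H) : ℝ) := by exact_mod_cast Fintype.card_pos
  refine le_of_mul_le_mul_left ?_ hcard
  calc (Fintype.card (E ⧸ H) : ℝ) * ‖∑ x : H, χ x‖
      = ‖∑ φ : AddChar (E ⧸ H) ℂ, gaussSum χ (φ.compAddMonoidHom (QuotientAddGroup.mk' H))‖ := by
        rw [← hfourier, norm_mul, Complex.norm_natCast]
    _ ≤ ∑ φ : AddChar (E ⧸ H) ℂ, ‖gaussSum χ (φ.compAddMonoidHom (QuotientAddGroup.mk' H))‖ :=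
        norm_sum_le _ _
    _ ≤ ∑ φ : AddChar (E ⧸ H) ℂ, √(Fintype.card E) :=
        sum_le_sum fun φ _ ↦ norm_gaussSum_le hχ _
    _ = Fintype.card (E ⧸ H) * √(Fintype.card E) := by simp

end GaussSum

lemma sub_two_mul_sqrt_pow_lt_pow_sub_one {q : ℝ} (hq : 2 ≤ q) {n k : ℕ}
    (hk : (k : ℝ) ≥ n / 2 + 1) : (q - 2) * √(q ^ n) < q ^ k - 1 := by
  have hsqrt : √(q ^ n) = q ^ ((n : ℝ) / 2) := by
    rw [Real.sqrt_eq_rpow, ← Real.rpow_natCast, ← Real.rpow_mul (by linarith)]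
    ring_nf
  have hpow : q ^ ((n : ℝ) / 2) * q ≤ q ^ k := by
    rw [← Real.rpow_add_one (by positivity), ← Real.rpow_natCast]
    exact Real.rpow_le_rpow_of_exponent_le (by linarith) hk
  have hone : 1 ≤ q ^ ((n : ℝ) / 2) := Real.one_le_rpow (by linarith) (by positivity)
  rw [hsqrt]
  nlinarith

theorem norm_surjective_on_large_subspace
    (F E : Type*) [Field F] [Fintype F] [Field E] [Fintype E] [Algebra F E]
    (W : Submodule F E)
    (hW : (Module.finrank F W : ℝ) ≥ (Module.finrank F E : ℝ) / 2 + 1) :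
    ∀ a : F, ∃ x ∈ W, Algebra.norm F x = a := by
  classical
  intro a
  rcases eq_or_ne a 0 with rfl | ha
  · exact ⟨0, W.zero_mem, Algebra.norm_zero⟩
  have : NeZero (Monoid.exponent Fˣ) := ⟨Monoid.exponent_ne_zero_of_finite⟩
  let N : E →*₀ F := { Algebra.norm F with map_zero' := Algebra.norm_zero }
  have hN : Function.Surjective N := FiniteField.norm_surjective F E
  have hchar (χ : MulChar F ℂ) (hχ : χ ≠ 1) : ‖∑ x : W, χ (N x)‖ ≤ √(Fintype.card E) :=
    MulChar.norm_sum_addSubgroup_le (MulChar.compMonoidWithZeroHom_ne_one hχ hN) W.toAddSubgroup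
  have hunits : #{x : W | IsUnit (N x)} = Fintype.card W - 1 := by
    simp [N, filter_ne', card_erase_of_mem]
  have hbound : ((Nat.card Fˣ : ℝ) - 1) * √(Fintype.card E) < #{x : W | IsUnit (N x)} := by
    rw [hunits, Nat.card_units, Nat.card_eq_fintype_card, Nat.cast_pred Fintype.card_pos,
      Nat.cast_pred Fintype.card_pos, Module.card_eq_pow_finrank (K := F) (V := W),
      Module.card_eq_pow_finrank (K := F) (V := E), sub_sub, one_add_one_eq_two]
    push_cast
    exact sub_two_mul_sqrt_pow_lt_pow_sub_one (by exact_mod_cast Fintype.one_lt_card) hW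
  obtain ⟨x, hx⟩ := MulChar.exists_apply_eq_of_norm_sum_le _ (Units.mk0 a ha) hchar hbound
  exact ⟨x, x.2, hx⟩
end
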